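/- Let n, b, m be positive integers, let x be a real n×b matrix, let G be a real m×b matrix, let η be a real number, and let λ > 0. Define F(ΔW) = ‖−η·b·G − ΔW·x‖_F² + λ·b·‖ΔW‖_F² for ΔW ∈ ℝ^{m×n}. If ΔW ∈ ℝ^{m×n} satisfies F(ΔW) ≤ F(V) for every V ∈ ℝ^{m×n}, then ΔW = −η · G · xᵀ · (x·xᵀ/b + λ·Iₙ)⁻¹; in other words, the global minimizer of F is unique and equals the TrAct update. -/

import Mathlib

/-! Writing `D = V - W⋆`, the objective is a quadratic in `D` whose linear term is
`-2 tr((A xᵀ - W⋆ (x xᵀ + μ I)) Dᵀ)`. At a solution `W⋆` of the normal equation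
`W⋆ (x xᵀ + μ I) = A xᵀ` this term vanishes, leaving
`F(V) = F(W⋆) + ‖D x‖² + μ ‖D‖²`, so for `μ > 0` every minimizer equals `W⋆`.
The TrAct update solves the normal equation with `A = -η b G`, `μ = λ b`, since
`x xᵀ / b + λ I` is positive definite. -/

open Matrix

/-- Squared Frobenius norm of a real matrix. -/
noncomputable def frobSq {k l : ℕ} (A : Matrix (Fin k) (Fin l) ℝ) : ℝ :=
  ∑ i, ∑ j, (A i j) ^ 2

section Frobenius

variable {k l : ℕ}

lemma frobSq_eq_trace_mul_transpose (A : Matrix (Fin k) (Fin l) ℝ) :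
    frobSq A = trace (A * Aᵀ) := by
  simp [frobSq, trace, mul_apply, sq]

lemma frobSq_nonneg (A : Matrix (Fin k) (Fin l) ℝ) : 0 ≤ frobSq A := by
  unfold frobSq
  positivity

lemma frobSq_eq_zero_iff {A : Matrix (Fin k) (Fin l) ℝ} : frobSq A = 0 ↔ A = 0 := by
  rw [frobSq_eq_trace_mul_transpose, ← conjTranspose_eq_transpose_of_trivial,
    trace_mul_conjTranspose_self_eq_zero_iff]

lemma frobSq_add (P Q : Matrix (Fin k) (Fin l) ℝ) :
    frobSq (P + Q) = frobSq P + 2 * trace (P * Qᵀ) + frobSq Q := by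
  have hQP : trace (Q * Pᵀ) = trace (P * Qᵀ) := by
    rw [← trace_transpose, transpose_mul, transpose_transpose]
  simp only [frobSq_eq_trace_mul_transpose, transpose_add, Matrix.add_mul, Matrix.mul_add,
    trace_add, hQP]
  ring

lemma frobSq_neg (A : Matrix (Fin k) (Fin l) ℝ) : frobSq (-A) = frobSq A := by
  simp [frobSq]

end Frobenius

section Ridge

variable {m n b : ℕ}

noncomputable def ridgeLoss (A : Matrix (Fin m) (Fin b) ℝ) (x : Matrix (Fin n) (Fin b) ℝ)
    (μ : ℝ) (V : Matrix (Fin m) (Fin n) ℝ) : ℝ :=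
  frobSq (A - V * x) + μ * frobSq V

lemma ridgeLoss_eq_add_of_mul_eq {A : Matrix (Fin m) (Fin b) ℝ} {x : Matrix (Fin n) (Fin b) ℝ}
    {μ : ℝ} {W : Matrix (Fin m) (Fin n) ℝ} (hW : W * (x * xᵀ + μ • 1) = A * xᵀ)
    (V : Matrix (Fin m) (Fin n) ℝ) :
    ridgeLoss A x μ V =
      ridgeLoss A x μ W + (frobSq ((V - W) * x) + μ * frobSq (V - W)) := by
  set D := V - W
  have hV : V = W + D := by simp [D]
  have hres : A - V * x = (A - W * x) + -(D * x) := by rw [hV, Matrix.add_mul]; abel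
  have hcross : trace ((A - W * x) * (-(D * x))ᵀ) + μ * trace (W * Dᵀ) = 0 := by
    have hnormal : (A - W * x) * xᵀ - μ • W = 0 := by
      rw [Matrix.sub_mul, ← hW, Matrix.mul_assoc, Matrix.mul_add, Matrix.mul_smul, Matrix.mul_one]
      abel
    calc trace ((A - W * x) * (-(D * x))ᵀ) + μ * trace (W * Dᵀ)
        = -trace (((A - W * x) * xᵀ - μ • W) * Dᵀ) := by
          simp only [transpose_neg, transpose_mul, Matrix.mul_neg, trace_neg, Matrix.sub_mul,
            trace_sub, Matrix.smul_mul, trace_smul, smul_eq_mul, Matrix.mul_assoc]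
          ring
      _ = 0 := by rw [hnormal, Matrix.zero_mul, trace_zero, neg_zero]
  unfold ridgeLoss
  rw [hres, frobSq_add, frobSq_neg, hV, frobSq_add]
  linear_combination 2 * hcross

lemma eq_of_ridgeLoss_le {A : Matrix (Fin m) (Fin b) ℝ} {x : Matrix (Fin n) (Fin b) ℝ}
    {μ : ℝ} (hμ : 0 < μ) {W V : Matrix (Fin m) (Fin n) ℝ}
    (hW : W * (x * xᵀ + μ • 1) = A * xᵀ) (hV : ridgeLoss A x μ V ≤ ridgeLoss A x μ W) :
    V = W := by
  rw [ridgeLoss_eq_add_of_mul_eq hW V] at hV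
  have h1 := frobSq_nonneg ((V - W) * x)
  have h2 := frobSq_nonneg (V - W)
  have hD : frobSq (V - W) = 0 := by nlinarith
  exact sub_eq_zero.mp (frobSq_eq_zero_iff.mp hD)

end Ridge

lemma posDef_smul_mul_transpose_add_smul_one {ι κ : Type*} [Fintype ι] [Fintype κ]
    [DecidableEq ι] (x : Matrix ι κ ℝ) {c lam : ℝ} (hc : 0 ≤ c) (hlam : 0 < lam) :
    (c • (x * xᵀ) + lam • (1 : Matrix ι ι ℝ)).PosDef := by
  have hxx : (x * xᵀ).PosSemidef := by
    simpa only [conjTranspose_eq_transpose_of_trivial] using posSemidef_self_mul_conjTranspose x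
  exact (PosDef.one.smul hlam).posSemidef_add (hxx.smul hc)

section TrAct

variable {m n b : ℕ}

noncomputable def tractUpdate (η lam : ℝ) (G : Matrix (Fin m) (Fin b) ℝ)
    (x : Matrix (Fin n) (Fin b) ℝ) : Matrix (Fin m) (Fin n) ℝ :=
  (-η) • (G * xᵀ * ((b : ℝ)⁻¹ • (x * xᵀ) + lam • (1 : Matrix (Fin n) (Fin n) ℝ))⁻¹)

lemma tractUpdate_mul_eq (hb : 0 < b) {lam : ℝ} (hlam : 0 < lam) (η : ℝ)
    (G : Matrix (Fin m) (Fin b) ℝ) (x : Matrix (Fin n) (Fin b) ℝ) :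
    tractUpdate η lam G x * (x * xᵀ + (lam * b) • 1) = (-(η * b)) • G * xᵀ := by
  have hb' : (b : ℝ) ≠ 0 := by positivity
  set N : Matrix (Fin n) (Fin n) ℝ := (b : ℝ)⁻¹ • (x * xᵀ) + lam • 1
  have hN : IsUnit N.det := (isUnit_iff_isUnit_det N).mp
    (posDef_smul_mul_transpose_add_smul_one x (by positivity) hlam).isUnit
  have hscale : x * xᵀ + (lam * b) • 1 = (b : ℝ) • N := by
    simp only [N, smul_add, smul_smul, mul_inv_cancel₀ hb', one_smul, mul_comm lam]
  rw [hscale, tractUpdate, Matrix.mul_smul, Matrix.smul_mul, nonsing_inv_mul_cancel_right _ _ hN,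
    smul_smul, Matrix.smul_mul, mul_neg, mul_comm (b : ℝ) η]

end TrAct

theorem tract_global_min_unique_general
    (n b m : ℕ) (hb : 0 < b)
    (x : Matrix (Fin n) (Fin b) ℝ) (G : Matrix (Fin m) (Fin b) ℝ)
    (η lam : ℝ) (hlam : 0 < lam)
    (F : Matrix (Fin m) (Fin n) ℝ → ℝ)
    (hF : ∀ ΔW, F ΔW = frobSq ((-(η * (b : ℝ))) • G - ΔW * x) + lam * (b : ℝ) * frobSq ΔW)
    (ΔW : Matrix (Fin m) (Fin n) ℝ)
    (hmin : ∀ V : Matrix (Fin m) (Fin n) ℝ, F ΔW ≤ F V) :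
    ΔW = (-η) • (G * xᵀ * ((b : ℝ)⁻¹ • (x * xᵀ) + lam • (1 : Matrix (Fin n) (Fin n) ℝ))⁻¹) := by
  have hF' : ∀ V, F V = ridgeLoss ((-(η * b)) • G) x (lam * b) V := hF
  have hmin' := hmin (tractUpdate η lam G x)
  rw [hF', hF'] at hmin'
  exact eq_of_ridgeLoss_le (by positivity) (tractUpdate_mul_eq hb hlam η G x) hmin'

/-- Any global minimizer of the TrAct objective
`F(ΔW) = ‖−η·b·G − ΔW·x‖_F² + λ·b·‖ΔW‖_F²` equals the TrAct update
`−η · G · xᵀ · (x·xᵀ/b + λ·Iₙ)⁻¹`, i.e. the minimizer is unique. -/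
theorem tract_global_min_unique
    (n b m : ℕ) (hn : 0 < n) (hb : 0 < b) (hm : 0 < m)
    (x : Matrix (Fin n) (Fin b) ℝ) (G : Matrix (Fin m) (Fin b) ℝ)
    (η lam : ℝ) (hlam : 0 < lam)
    (F : Matrix (Fin m) (Fin n) ℝ → ℝ)
    (hF : ∀ ΔW, F ΔW = frobSq ((-(η * (b : ℝ))) • G - ΔW * x) + lam * (b : ℝ) * frobSq ΔW)
    (ΔW : Matrix (Fin m) (Fin n) ℝ)
    (hmin : ∀ V : Matrix (Fin m) (Fin n) ℝ, F ΔW ≤ F V) :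
    ΔW = (-η) • (G * xᵀ * ((b : ℝ)⁻¹ • (x * xᵀ) + lam • (1 : Matrix (Fin n) (Fin n) ℝ))⁻¹) :=
  tract_global_min_unique_general n b m hb x G η lam hlam F hF ΔW hmin
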